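/- arXiv:1811.11949 — 3 statements merged into one kernel-verified Lean document; each statement's English description precedes it below -/
import Mathlib

section
/- Let q = 3^n and let a, b in F_q^* satisfy b = b^2 - a^2. If both 1 + a + b and 1 - a + b are squares in F_q (necessarily nonzero, with (1+a+b)(1-a+b) = 1), then -b is a square in F_q^*. -/
/-- In F_q with q = 3^n, if a, b ≠ 0 satisfy b = b^2 - a^2 and both
1 + a + b and 1 - a + b are squares in F_q, then -b is a nonzero square in F_q^*. -/
theorem stmt5 (n : ℕ) (hn : 0 < n)
    (F : Type*) [Field F] [Fintype F] (hcard : Fintype.card F = 3 ^ n)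
    (a b : F) (ha : a ≠ 0) (hb : b ≠ 0) (hab : b = b ^ 2 - a ^ 2)
    (h1 : ∃ s : F, 1 + a + b = s ^ 2) (h2 : ∃ t : F, 1 - a + b = t ^ 2) :
    ∃ c : F, c ≠ 0 ∧ -b = c ^ 2 := by
  have h3 : (3 : F) = 0 := by
    have hc := FiniteField.cast_card_eq_zero F
    rw [hcard] at hc
    push_cast at hc
    exact pow_eq_zero_iff hn.ne' |>.mp hc
  obtain ⟨s, hs⟩ := h1
  obtain ⟨t, ht⟩ := h2
  have hst : (s * t - 1) * (s * t + 1) = 0 := by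
    linear_combination (-(t^2)) * hs + (-(1 + a + b)) * ht - hab + b * h3
  rcases mul_eq_zero.mp hst with h | h
  · have hv : s * t = 1 := sub_eq_zero.mp h
    refine ⟨s - t, ?_, ?_⟩
    · intro hc
      apply hb
      have : -b = (s - t) ^ 2 := by linear_combination hs + ht + 2 * hv - b * h3
      rw [hc] at this
      simpa using this
    · linear_combination hs + ht + 2 * hv - b * h3
  · have hv : s * t = -1 := by linear_combination h
    refine ⟨s + t, ?_, ?_⟩
    · intro hc
      apply hb
      have : -b = (s + t) ^ 2 := by linear_combination hs + ht - 2 * hv - b * h3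
      rw [hc] at this
      simpa using this
    · linear_combination hs + ht - 2 * hv - b * h3
end

section
/- If q = 3^n with n even and k in F_q satisfies k^3 + k^2 + k - 1 = 0, then k is a square in F_q. -/
/-- If q = 3^n with n even and k ∈ F_q satisfies k^3 + k^2 + k - 1 = 0,
then k is a square in F_q. -/
theorem stmt8 (n : ℕ) (hn : 0 < n) (hneven : Even n)
    (F : Type*) [Field F] [Fintype F] (hcard : Fintype.card F = 3 ^ n)
    (k : F) (hk : k ^ 3 + k ^ 2 + k - 1 = 0) :
    ∃ t : F, k = t ^ 2 := by
  obtain ⟨m, hp, hc⟩ := FiniteField.card F (ringChar F)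
  have hdvd : ringChar F ∣ 3 := by
    apply hp.dvd_of_dvd_pow (n := n)
    rw [← hcard, hc]
    exact dvd_pow_self _ m.pos.ne'
  have hp3 : ringChar F = 3 := (Nat.prime_dvd_prime_iff_eq hp (by norm_num)).mp hdvd
  have h3 : (3 : F) = 0 := by have h := ringChar.Nat.cast_ringChar (R := F); rw [hp3] at h; exact_mod_cast h
  have h13 : k ^ 13 = 1 := by
    linear_combination (1 + k - k ^ 2 + k ^ 3 + k ^ 4 + k ^ 5 - k ^ 7 - k ^ 9 + k ^ 10) * hk
      + (-k ^ 2 - k ^ 6 - k ^ 7 + k ^ 10) * h3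
  exact ⟨k ^ 7, by linear_combination (-k) * h13⟩
end

section
/- Let q = 3^n with n odd, and let z in F_{q^2} satisfy z^2 = -1. Then 1 + z has multiplicative order 8 in F_{q^2}^*, and since q^2 - 1 ≡ 8 (mod 16), any nonsquare a in F_{q^2}^* can be written as a = u(1+z) with u a square in F_{q^2}^*. -/
/-- For q = 3^n, n odd, and z ∈ F_{q^2} with z^2 = -1: the element 1 + z
has multiplicative order 8, q^2 - 1 ≡ 8 (mod 16), and every nonsquare a ∈ F_{q^2}^*
can be written a = u(1+z) with u a nonzero square. -/
theorem stmt14 (n : ℕ) (hn : 0 < n) (hnodd : Odd n)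
    (F : Type*) [Field F] [Fintype F] (hcard : Fintype.card F = (3 ^ n) ^ 2)
    (z : F) (hz : z ^ 2 = -1) :
    orderOf (1 + z) = 8 ∧ ((3 ^ n : ℕ) ^ 2 - 1) % 16 = 8 ∧
      ∀ a : F, a ≠ 0 → (¬ ∃ t : F, a = t ^ 2) →
        ∃ u : F, (∃ s : F, s ≠ 0 ∧ u = s ^ 2) ∧ a = u * (1 + z) := by
  -- characteristic 3
  have h3 : (3 : F) = 0 := by
    have h := FiniteField.cast_card_eq_zero F
    rw [hcard] at h
    push_cast at h
    exact pow_eq_zero_iff hn.ne' |>.mp (pow_eq_zero_iff two_ne_zero |>.mp h)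
  have hm1 : (-1 : F) ≠ 1 := by
    intro h
    exact one_ne_zero (by linear_combination h3 + h : (1 : F) = 0)
  have h2 : (1 + z) ^ 2 = -z := by linear_combination hz + z * h3
  have h4 : (1 + z) ^ 4 = -1 := by
    have e : (1 + z) ^ 4 = ((1 + z) ^ 2) ^ 2 := by ring
    rw [e, h2, neg_sq, hz]
  have h8 : (1 + z) ^ 8 = 1 := by
    have e : (1 + z) ^ 8 = ((1 + z) ^ 4) ^ 2 := by ring
    rw [e, h4]; ring
  have hord : orderOf (1 + z) = 8 := by
    have : orderOf (1 + z) = 2 ^ (2 + 1) :=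
      orderOf_eq_prime_pow (by norm_num; rw [h4]; exact hm1) (by norm_num; exact h8)
    simpa using this
  -- arithmetic part
  have hmod16 : (3 ^ n : ℕ) ^ 2 % 16 = 9 := by
    obtain ⟨k, rfl⟩ := hnodd
    have e : ((3 : ℕ) ^ (2 * k + 1)) ^ 2 = 9 * 81 ^ k := by
      rw [← pow_mul, show (2 * k + 1) * 2 = 4 * k + 2 by ring, pow_add, pow_mul]
      norm_num
      ring
    rw [e, Nat.mul_mod, Nat.pow_mod]
    norm_num
  have hmod : ((3 ^ n : ℕ) ^ 2 - 1) % 16 = 8 := by omega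
  refine ⟨hord, hmod, ?_⟩
  -- nonsquare part
  intro a ha hnsq
  have hchar2 : ringChar F ≠ 2 := by
    intro h
    have h2z : (2 : F) = 0 := by
      have hc := ringChar.Nat.cast_ringChar (R := F)
      rw [h] at hc; exact_mod_cast hc
    exact one_ne_zero (by linear_combination h3 - h2z : (1 : F) = 0)
  have hzne : (1 + z) ≠ 0 := by
    intro h
    rw [h] at h4
    simp at h4
  obtain ⟨k, hk⟩ : ∃ k, Fintype.card F / 2 = 8 * k + 4 := by
    rw [hcard]
    exact ⟨(3 ^ n : ℕ) ^ 2 / 16, by omega⟩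
  have hzpow : (1 + z) ^ (Fintype.card F / 2) = -1 := by
    rw [hk, pow_add, pow_mul, h8, one_pow, one_mul, h4]
  have hapow : a ^ (Fintype.card F / 2) = -1 := by
    rcases FiniteField.pow_dichotomy hchar2 ha with h | h
    · exfalso
      apply hnsq
      rcases (FiniteField.isSquare_iff hchar2 ha).mpr h with ⟨r, hr⟩
      exact ⟨r, by rw [hr, sq]⟩
    · exact h
  have hune : a * (1 + z)⁻¹ ≠ 0 := mul_ne_zero ha (inv_ne_zero hzne)
  have hupow : (a * (1 + z)⁻¹) ^ (Fintype.card F / 2) = 1 := by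
    rw [mul_pow, hapow, inv_pow, hzpow]
    simp
  refine ⟨a * (1 + z)⁻¹, ?_, ?_⟩
  · rcases (FiniteField.isSquare_iff hchar2 hune).mpr hupow with ⟨r, hr⟩
    refine ⟨r, ?_, by rw [hr, sq]⟩
    intro h
    rw [h, mul_zero] at hr
    exact hune hr
  · field_simp
end
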